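/- Let A satisfy the RIP of order K with constant δ ∈ [0,1): (1-δ)‖v‖₂² ≤ ‖Av‖₂² ≤ (1+δ)‖v‖₂² for all K-sparse v. Let x ∈ ℂⁿ, let x_K be its best K-term approximation (keeping the K largest-magnitude entries) and x_{K^c} = x - x_K its tail. Then ‖Ax‖₂ ≥ √(1-δ)·(‖x_K‖₂ - κ·(‖x_{K^c}‖₂ + ‖x_{K^c}‖₁/√K)), where κ = √(1+δ)/√(1-δ). In particular, if ‖x_{K^c}‖₂/‖x_K‖₂ + ‖x_{K^c}‖₁/(√K‖x_K‖₂) < 1/κ and x_K ≠ 0, then ‖Ax‖₂ > 0. -/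

import Mathlib

open scoped BigOperators

/-- The Euclidean (ℓ₂) norm of a finitely indexed complex vector. -/
noncomputable def l2 {ι : Type*} [Fintype ι] (v : ι → ℂ) : ℝ :=
  Real.sqrt (∑ i, ‖v i‖ ^ 2)

/-- The ℓ₁ norm of a finitely indexed complex vector. -/
noncomputable def l1 {ι : Type*} [Fintype ι] (v : ι → ℂ) : ℝ :=
  ∑ i, ‖v i‖

/-- A vector is `K`-sparse if it has at most `K` nonzero entries. -/
def Sparse {n : ℕ} (K : ℕ) (x : Fin n → ℂ) : Prop :=
  ∃ s : Finset (Fin n), s.card ≤ K ∧ ∀ i ∉ s, x i = 0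

/-- `xK` is a best `K`-term approximation of `x`: it is `K`-sparse, agrees with `x`
on its support, and keeps the largest-magnitude entries. -/
def IsBestKApprox {n : ℕ} (K : ℕ) (x xK : Fin n → ℂ) : Prop :=
  Sparse K xK ∧ (∀ i, xK i ≠ 0 → xK i = x i) ∧
    (∀ i j, xK i ≠ 0 → xK j = 0 → ‖x j‖ ≤ ‖x i‖)

/-! Write `x = x_K + t`. The RIP lower bound gives `‖A x_K‖₂ ≥ √(1-δ) ‖x_K‖₂`, so it suffices to
show `‖A t‖₂ ≤ √(1+δ) (‖t‖₂ + ‖t‖₁ / √K)` for every `t`. Split `t = h + r`, where `h` keeps the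
`K` largest entries of `t`. Then `h` is `K`-sparse, and every entry of `r` is at most the average
of the entries of `h`, so `√K ‖r‖_∞ ≤ ‖h‖₁ / √K`. This is why the induction on the support runs
with `‖t‖₂` weakened to `min ‖t‖₂ (√K ‖t‖_∞)`: the RIP upper bound on `h` and the induction
hypothesis on `r` give `‖A t‖₂ ≤ √(1+δ) (‖h‖₂ + ‖h‖₁ / √K + ‖r‖₁ / √K)`. -/

open Finset Matrix

lemma le_sqrt_mul_of_sq_le_mul_sq {a b c : ℝ} (hb : 0 ≤ b) (h : a ^ 2 ≤ c * b ^ 2) :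
    a ≤ √c * b :=
  calc a ≤ |a| := le_abs_self a
    _ ≤ √(c * b ^ 2) := Real.abs_le_sqrt h
    _ = √c * b := by rw [Real.sqrt_mul' c (sq_nonneg b), Real.sqrt_sq hb]

lemma sqrt_mul_le_of_mul_sq_le_sq {a b c : ℝ} (ha : 0 ≤ a) (hb : 0 ≤ b) (h : c * b ^ 2 ≤ a ^ 2) :
    √c * b ≤ a :=
  calc √c * b = √(c * b ^ 2) := by rw [Real.sqrt_mul' c (sq_nonneg b), Real.sqrt_sq hb]
    _ ≤ √(a ^ 2) := Real.sqrt_le_sqrt h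
    _ = a := Real.sqrt_sq ha

lemma mul_lt_of_div_lt_one_div {κ a b : ℝ} (hκ : 0 ≤ κ) (hb : 0 < b) (h : a / b < 1 / κ) :
    κ * a < b := by
  rcases hκ.eq_or_lt with rfl | hκ
  · simpa using hb
  · rw [div_lt_div_iff₀ hb hκ] at h
    linarith

lemma Finset.exists_subset_card_eq_forall_mul_le_sum {ι : Type*} [DecidableEq ι] {U : Finset ι}
    {K : ℕ} (hK : K ≤ U.card) (f : ι → ℝ) :
    ∃ S ⊆ U, S.card = K ∧ ∀ j ∈ U \ S, K * f j ≤ ∑ i ∈ S, f i := by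
  obtain ⟨S, hS, hmax⟩ :=
    (powersetCard K U).exists_max_image (fun S => ∑ i ∈ S, f i) (powersetCard_nonempty.2 hK)
  obtain ⟨hSU, hSK⟩ := mem_powersetCard.1 hS
  refine ⟨S, hSU, hSK, fun j hj => ?_⟩
  obtain ⟨hjU, hjS⟩ := mem_sdiff.1 hj
  -- `S` has the largest sum among the `K`-subsets of `U`, so swapping `i ∈ S` for `j` cannot help
  have hle : ∀ i ∈ S, f j ≤ f i := by
    intro i hi
    have hswap : insert j (S.erase i) ∈ powersetCard K U := by
      refine mem_powersetCard.2 ⟨insert_subset hjU ((erase_subset i S).trans hSU), ?_⟩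
      have := card_pos.2 ⟨i, hi⟩
      rw [card_insert_of_notMem (fun h => hjS (mem_of_mem_erase h)), card_erase_of_mem hi]
      omega
    have := hmax _ hswap
    rw [sum_insert (fun h => hjS (mem_of_mem_erase h)), sum_erase_eq_sub hi] at this
    linarith
  simpa [hSK] using card_nsmul_le_sum S f (f j) hle

section Norms

variable {ι : Type*} [Fintype ι]

lemma l2_eq_norm_toLp (v : ι → ℂ) : l2 v = ‖WithLp.toLp 2 v‖ := by
  rw [EuclideanSpace.norm_eq]
  rfl

lemma l2_nonneg (v : ι → ℂ) : 0 ≤ l2 v := Real.sqrt_nonneg _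

lemma l2_sq (v : ι → ℂ) : l2 v ^ 2 = ∑ i, ‖v i‖ ^ 2 :=
  Real.sq_sqrt (sum_nonneg fun _ _ => sq_nonneg _)

lemma l2_pos {v : ι → ℂ} (hv : v ≠ 0) : 0 < l2 v := by
  rw [l2_eq_norm_toLp]
  exact norm_pos_iff.2 fun h => hv (by simpa using congrArg WithLp.ofLp h)

lemma l2_add_le (u v : ι → ℂ) : l2 (u + v) ≤ l2 u + l2 v := by
  simpa only [l2_eq_norm_toLp, WithLp.toLp_add] using norm_add_le _ _

lemma l2_sub_le (u v : ι → ℂ) : l2 (u - v) ≤ l2 u + l2 v := by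
  simpa only [l2_eq_norm_toLp, WithLp.toLp_sub] using norm_sub_le _ _

lemma l2_indicator_le (s : Set ι) (v : ι → ℂ) : l2 (s.indicator v) ≤ l2 v :=
  Real.sqrt_le_sqrt <| sum_le_sum fun i _ => by gcongr; exact norm_indicator_le_norm_self v i

lemma norm_indicator_le_norm (s : Set ι) (v : ι → ℂ) : ‖s.indicator v‖ ≤ ‖v‖ :=
  (pi_norm_le_iff_of_nonneg (norm_nonneg v)).2 fun i =>
    (norm_indicator_le_norm_self v i).trans (norm_le_pi_norm v i)

lemma l2_le_sqrt_card_mul_norm {s : Finset ι} {v : ι → ℂ} (hv : ∀ i ∉ s, v i = 0) :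
    l2 v ≤ √s.card * ‖v‖ := by
  refine le_sqrt_mul_of_sq_le_mul_sq (norm_nonneg v) ?_
  calc l2 v ^ 2 = ∑ i ∈ s, ‖v i‖ ^ 2 := by
        rw [l2_sq, sum_subset (subset_univ s) fun i _ hi => by simp [hv i hi]]
    _ ≤ s.card • ‖v‖ ^ 2 :=
        sum_le_card_nsmul _ _ _ fun i _ => by gcongr; exact norm_le_pi_norm v i
    _ = s.card * ‖v‖ ^ 2 := nsmul_eq_mul _ _

lemma l1_nonneg (v : ι → ℂ) : 0 ≤ l1 v := sum_nonneg fun _ _ => norm_nonneg _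

lemma l1_indicator (s : Finset ι) (v : ι → ℂ) :
    l1 ((s : Set ι).indicator v) = ∑ i ∈ s, ‖v i‖ := by
  simp only [l1, norm_indicator_eq_indicator_norm]
  exact sum_indicator_subset _ (subset_univ s)

lemma l1_indicator_add_l1_indicator_compl (s : Set ι) (v : ι → ℂ) :
    l1 (s.indicator v) + l1 (sᶜ.indicator v) = l1 v := by
  simp only [l1, norm_indicator_eq_indicator_norm, ← sum_add_distrib,
    Set.indicator_self_add_compl_apply]

end Norms

section Sparse

variable {n K : ℕ}

lemma sparse_indicator {S : Finset (Fin n)} (hS : S.card ≤ K) (v : Fin n → ℂ) :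
    Sparse K ((S : Set (Fin n)).indicator v) :=
  ⟨S, hS, fun _ hi => Set.indicator_of_notMem (by simpa using hi) v⟩

lemma Sparse.l2_le_sqrt_mul_norm {v : Fin n → ℂ} (hv : Sparse K v) : l2 v ≤ √K * ‖v‖ := by
  obtain ⟨s, hsK, hs⟩ := hv
  exact (l2_le_sqrt_card_mul_norm hs).trans (by gcongr)

lemma sqrt_mul_norm_indicator_compl_le (hK : 0 < K) {U S : Finset (Fin n)} {v : Fin n → ℂ}
    (hv : ∀ i ∉ U, v i = 0) (hS : ∀ j ∈ U \ S, K * ‖v j‖ ≤ ∑ i ∈ S, ‖v i‖) :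
    √K * ‖(S : Set (Fin n))ᶜ.indicator v‖ ≤ l1 ((S : Set (Fin n)).indicator v) / √K := by
  have hK' : (0 : ℝ) < K := Nat.cast_pos.2 hK
  have hmul : K * ‖(S : Set (Fin n))ᶜ.indicator v‖ ≤ l1 ((S : Set (Fin n)).indicator v) := by
    rw [← le_div_iff₀' hK', pi_norm_le_iff_of_nonneg (div_nonneg (l1_nonneg _) hK'.le)]
    intro j
    rw [le_div_iff₀' hK', l1_indicator]
    by_cases hj : j ∈ S
    · simpa [hj] using sum_nonneg fun i _ => norm_nonneg (v i)
    rw [Set.indicator_of_mem (by simpa using hj)]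
    by_cases hjU : j ∈ U
    · exact hS j (mem_sdiff.2 ⟨hjU, hj⟩)
    · simpa [hv j hjU] using sum_nonneg fun i _ => norm_nonneg (v i)
  calc √K * ‖(S : Set (Fin n))ᶜ.indicator v‖ = K * ‖(S : Set (Fin n))ᶜ.indicator v‖ / √K := by
        field_simp
        rw [Real.sq_sqrt hK'.le, mul_comm]
    _ ≤ l1 ((S : Set (Fin n)).indicator v) / √K := by gcongr

lemma l2_mulVec_le_min_add {m : ℕ} (hK : 0 < K) {A : Matrix (Fin m) (Fin n) ℂ} {C : ℝ}
    (hC : 0 ≤ C) (hA : ∀ v, Sparse K v → l2 (A *ᵥ v) ≤ C * l2 v) (t : Fin n → ℂ) :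
    l2 (A *ᵥ t) ≤ C * (min (l2 t) (√K * ‖t‖) + l1 t / √K) := by
  suffices ∀ U : Finset (Fin n), ∀ t : Fin n → ℂ, (∀ i ∉ U, t i = 0) →
      l2 (A *ᵥ t) ≤ C * (min (l2 t) (√K * ‖t‖) + l1 t / √K) from
    this univ t (by simp)
  intro U
  induction U using Finset.strongInduction with
  | H U ih =>
  intro t ht
  by_cases hU : U.card ≤ K
  · have hsp : Sparse K t := ⟨U, hU, ht⟩
    calc l2 (A *ᵥ t) ≤ C * l2 t := hA t hsp
      _ ≤ C * (min (l2 t) (√K * ‖t‖) + l1 t / √K) := by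
        gcongr
        exact le_add_of_le_of_nonneg (le_min le_rfl hsp.l2_le_sqrt_mul_norm)
          (div_nonneg (l1_nonneg t) (Real.sqrt_nonneg _))
  obtain ⟨S, hSU, hSK, hS⟩ :=
    exists_subset_card_eq_forall_mul_le_sum (not_le.1 hU).le fun i => ‖t i‖
  set head := (S : Set (Fin n)).indicator t
  set tail := (S : Set (Fin n))ᶜ.indicator t
  have htail_supp : ∀ i ∉ U \ S, tail i = 0 := by
    intro i hi
    by_cases hiS : i ∈ S
    · exact Set.indicator_of_notMem (by simpa using hiS) t
    · simp [tail, ht i fun hiU => hi (mem_sdiff.2 ⟨hiU, hiS⟩)]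
  have hhead : l2 head ≤ min (l2 t) (√K * ‖t‖) :=
    le_min (l2_indicator_le _ t) <| (sparse_indicator hSK.le t).l2_le_sqrt_mul_norm.trans <| by
      gcongr
      exact norm_indicator_le_norm _ t
  have htail : √K * ‖tail‖ ≤ l1 head / √K := sqrt_mul_norm_indicator_compl_le hK ht hS
  have IH := ih (U \ S) (sdiff_ssubset hSU (card_pos.1 (hSK ▸ hK))) tail htail_supp
  calc l2 (A *ᵥ t) ≤ l2 (A *ᵥ head) + l2 (A *ᵥ tail) := by
        have hsplit : head + tail = t := Set.indicator_self_add_compl _ t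
        conv_lhs => rw [← hsplit, mulVec_add]
        exact l2_add_le _ _
    _ ≤ C * l2 head + C * (√K * ‖tail‖ + l1 tail / √K) :=
        add_le_add (hA _ (sparse_indicator hSK.le t)) (IH.trans (by gcongr; exact min_le_right _ _))
    _ ≤ C * (min (l2 t) (√K * ‖t‖) + (l1 head + l1 tail) / √K) := by
        rw [← mul_add]
        gcongr
        rw [add_div]
        linarith
    _ = C * (min (l2 t) (√K * ‖t‖) + l1 t / √K) := by
        rw [l1_indicator_add_l1_indicator_compl]

lemma l2_mulVec_le_of_forall_sparse {m : ℕ} (hK : 0 < K) {A : Matrix (Fin m) (Fin n) ℂ} {C : ℝ}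
    (hC : 0 ≤ C) (hA : ∀ v, Sparse K v → l2 (A *ᵥ v) ≤ C * l2 v) (t : Fin n → ℂ) :
    l2 (A *ᵥ t) ≤ C * (l2 t + l1 t / √K) :=
  (l2_mulVec_le_min_add hK hC hA t).trans (by gcongr; exact min_le_left _ _)

end Sparse

theorem lower_bound_image_general_signal_general {m n K : ℕ} (hK : 0 < K)
    (A : Matrix (Fin m) (Fin n) ℂ) (δ : ℝ) (hδ1 : δ < 1)
    (hRIP : ∀ v : Fin n → ℂ, Sparse K v →
      (1 - δ) * l2 v ^ 2 ≤ l2 (A.mulVec v) ^ 2 ∧ l2 (A.mulVec v) ^ 2 ≤ (1 + δ) * l2 v ^ 2)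
    (x xK : Fin n → ℂ) (hbest : IsBestKApprox K x xK) :
    Real.sqrt (1 - δ) * (l2 xK - (Real.sqrt (1 + δ) / Real.sqrt (1 - δ)) *
        (l2 (x - xK) + l1 (x - xK) / Real.sqrt K)) ≤ l2 (A.mulVec x) ∧
    (l2 (x - xK) / l2 xK + l1 (x - xK) / (Real.sqrt K * l2 xK)
        < 1 / (Real.sqrt (1 + δ) / Real.sqrt (1 - δ)) → xK ≠ 0 →
      0 < l2 (A.mulVec x)) := by
  set E := l2 (x - xK) + l1 (x - xK) / √K
  have hδ : 0 < √(1 - δ) := Real.sqrt_pos.2 (by linarith)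
  have hhead : √(1 - δ) * l2 xK ≤ l2 (A *ᵥ xK) :=
    sqrt_mul_le_of_mul_sq_le_sq (l2_nonneg _) (l2_nonneg xK) (hRIP xK hbest.1).1
  have htail : l2 (A *ᵥ (x - xK)) ≤ √(1 + δ) * E :=
    l2_mulVec_le_of_forall_sparse hK (Real.sqrt_nonneg _)
      (fun v hv => le_sqrt_mul_of_sq_le_mul_sq (l2_nonneg v) (hRIP v hv).2) (x - xK)
  have hsub : l2 (A *ᵥ xK) ≤ l2 (A *ᵥ x) + l2 (A *ᵥ (x - xK)) := by
    simpa [mulVec_sub] using l2_sub_le (A *ᵥ x) (A *ᵥ (x - xK))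
  have hbound : √(1 - δ) * (l2 xK - √(1 + δ) / √(1 - δ) * E) ≤ l2 (A *ᵥ x) := by
    rw [mul_sub, ← mul_assoc, mul_div_cancel₀ _ hδ.ne']
    linarith
  refine ⟨hbound, fun hsmall hxK => hbound.trans_lt' (mul_pos hδ (sub_pos.2 ?_))⟩
  rw [← div_div, ← add_div] at hsmall
  exact mul_lt_of_div_lt_one_div (by positivity) (l2_pos hxK) hsmall

/-- lower bound on the image of a general signal, in terms of head and tail. -/
theorem lower_bound_image_general_signal {m n K : ℕ} (hK : 0 < K)
    (A : Matrix (Fin m) (Fin n) ℂ) (δ : ℝ) (hδ0 : 0 ≤ δ) (hδ1 : δ < 1)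
    (hRIP : ∀ v : Fin n → ℂ, Sparse K v →
      (1 - δ) * l2 v ^ 2 ≤ l2 (A.mulVec v) ^ 2 ∧ l2 (A.mulVec v) ^ 2 ≤ (1 + δ) * l2 v ^ 2)
    (x xK : Fin n → ℂ) (hbest : IsBestKApprox K x xK) :
    Real.sqrt (1 - δ) * (l2 xK - (Real.sqrt (1 + δ) / Real.sqrt (1 - δ)) *
        (l2 (x - xK) + l1 (x - xK) / Real.sqrt K)) ≤ l2 (A.mulVec x) ∧
    (l2 (x - xK) / l2 xK + l1 (x - xK) / (Real.sqrt K * l2 xK)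
        < 1 / (Real.sqrt (1 + δ) / Real.sqrt (1 - δ)) → xK ≠ 0 →
      0 < l2 (A.mulVec x)) :=
  lower_bound_image_general_signal_general hK A δ hδ1 hRIP x xK hbest
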